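/- Let X and Y be proper Gromov hyperbolic geodesic metric spaces and let f: X → Y be a quasi-isometry. If X has a pole at v, then Y has a pole at f(v). -/
import Mathlib


namespace TreePaper

variable {X Y : Type*}

/-- The Gromov product `(x|y)_o = ½(d(x,o) + d(y,o) - d(x,y))`. -/
noncomputable def gromovProd [MetricSpace X] (o x y : X) : ℝ :=
  (dist x o + dist y o - dist x y) / 2

/-- `X` is Gromov hyperbolic: the `δ`-inequality holds for some `δ ≥ 0`, for every
base point and all points. -/
def GromovHyperbolic (X : Type*) [MetricSpace X] : Prop :=
  ∃ δ : ℝ, 0 ≤ δ ∧ ∀ o x y z : X,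
    min (gromovProd o x z) (gromovProd o z y) - δ ≤ gromovProd o x y

/-- A geodesic ray emanating from `v`. -/
def IsGeodRay [MetricSpace X] (v : X) (γ : ℝ → X) : Prop :=
  γ 0 = v ∧ ∀ s t : ℝ, 0 ≤ s → 0 ≤ t → dist (γ s) (γ t) = |s - t|

/-- `X` has a pole at `v`: there is `M > 0` such that each point of `X` lies in the
`M`-neighborhood of some geodesic ray emanating from `v`. -/
def HasPoleAt [MetricSpace X] (v : X) : Prop :=
  ∃ M : ℝ, 0 < M ∧ ∀ x : X, ∃ γ : ℝ → X, IsGeodRay v γ ∧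
    ∃ t : ℝ, 0 ≤ t ∧ dist x (γ t) ≤ M

/-- `X` is a geodesic metric space: every two points are joined by a geodesic. -/
def GeodesicSpace (X : Type*) [MetricSpace X] : Prop :=
  ∀ x y : X, ∃ γ : ℝ → X, γ 0 = x ∧ γ (dist x y) = y ∧
    ∀ s t : ℝ, s ∈ Set.Icc 0 (dist x y) → t ∈ Set.Icc 0 (dist x y) →
      dist (γ s) (γ t) = |s - t|

/-- `f : X → Y` is a quasi-isometry: an `ε`-full `(α,β)`-quasi-isometric embedding. -/
def QuasiIsometry [MetricSpace X] [MetricSpace Y] (f : X → Y) : Prop :=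
  ∃ α β ε : ℝ, 1 ≤ α ∧ 0 ≤ β ∧ 0 ≤ ε ∧
    (∀ x y : X, α⁻¹ * dist x y - β ≤ dist (f x) (f y) ∧
      dist (f x) (f y) ≤ α * dist x y + β) ∧
    ∀ y : Y, ∃ x : X, dist y (f x) ≤ ε

section Helpers
variable [MetricSpace Y]

lemma gromovProd_nonneg (o x y : Y) : 0 ≤ gromovProd o x y := by
  have := dist_triangle x o y
  have h1 := dist_comm o y
  unfold gromovProd
  linarith

lemma gromovProd_le_left (o x y : Y) : gromovProd o x y ≤ dist x o := by
  have h1 := dist_comm y x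
  unfold gromovProd
  linarith [dist_triangle y x o]

lemma gromovProd_comm (o x y : Y) : gromovProd o x y = gromovProd o y x := by
  unfold gromovProd
  rw [dist_comm x y]
  ring

/-- Lemma A: on any geodesic between x and y there is a point z with
`dist x z + dist z y = dist x y` and `dist o z ≤ (x|y)_o + 2δ`. -/
lemma exists_near_point (hYg : GeodesicSpace Y) {δ : ℝ}
    (hδ : ∀ o x y z : Y, min (gromovProd o x z) (gromovProd o z y) - δ ≤ gromovProd o x y)
    (x y o : Y) :
    ∃ z : Y, dist x z + dist z y = dist x y ∧ dist o z ≤ gromovProd o x y + 2*δ := by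
  obtain ⟨g, hg0, hgL, hiso⟩ := hYg x y
  have hL : 0 ≤ dist x y := dist_nonneg
  have hgc : ContinuousOn g (Set.Icc 0 (dist x y)) := by
    refine LipschitzOnWith.continuousOn (K := 1) ?_
    refine LipschitzOnWith.of_dist_le_mul ?_
    intro s hs t ht
    rw [hiso s t hs ht, NNReal.coe_one, one_mul, Real.dist_eq]
  have hcont : ContinuousOn (fun u => gromovProd o x (g u) - gromovProd o (g u) y)
      (Set.Icc 0 (dist x y)) := by
    have h1 : ContinuousOn (fun u => dist (g u) o) (Set.Icc 0 (dist x y)) :=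
      (continuous_id.dist continuous_const).comp_continuousOn hgc
    have h2 : ContinuousOn (fun u => dist x (g u)) (Set.Icc 0 (dist x y)) :=
      (continuous_const.dist continuous_id).comp_continuousOn hgc
    have h3 : ContinuousOn (fun u => dist (g u) y) (Set.Icc 0 (dist x y)) :=
      (continuous_id.dist continuous_const).comp_continuousOn hgc
    unfold gromovProd
    exact (((continuousOn_const.add h1).sub h2).div_const 2).sub
      (((h1.add continuousOn_const).sub h3).div_const 2)
  have hmem0 : (0:ℝ) ∈ Set.Icc 0 (dist x y) := ⟨le_rfl, hL⟩
  have hmemL : dist x y ∈ Set.Icc 0 (dist x y) := ⟨hL, le_rfl⟩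
  have hh0 : 0 ≤ gromovProd o x (g 0) - gromovProd o (g 0) y := by
    rw [hg0]
    have : gromovProd o x x = dist x o := by unfold gromovProd; rw [dist_self]; ring
    rw [this]
    linarith [gromovProd_le_left o x y]
  have hhL : gromovProd o x (g (dist x y)) - gromovProd o (g (dist x y)) y ≤ 0 := by
    rw [hgL]
    have : gromovProd o y y = dist y o := by unfold gromovProd; rw [dist_self]; ring
    rw [this]
    linarith [gromovProd_le_left o y x, gromovProd_comm o x y, dist_comm x y]
  obtain ⟨u, humem, hu0⟩ := intermediate_value_Icc' hL hcont ⟨hhL, hh0⟩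
  have hxz : dist x (g u) = u := by
    have h := hiso 0 u hmem0 humem
    rw [hg0] at h
    rw [h, abs_sub_comm, sub_zero, abs_of_nonneg humem.1]
  have hzy : dist (g u) y = dist x y - u := by
    have h := hiso u (dist x y) humem hmemL
    rw [hgL] at h
    rw [h, abs_of_nonpos (by linarith [humem.2])]
    ring
  have hsum : dist x (g u) + dist (g u) y = dist x y := by rw [hxz, hzy]; ring
  refine ⟨g u, hsum, ?_⟩
  have heq : gromovProd o x (g u) = gromovProd o (g u) y := by
    simp only at hu0
    linarith
  have hmin := hδ o x y (g u)
  rw [heq, min_self] at hmin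
  have hid : dist o (g u) = gromovProd o x (g u) + gromovProd o (g u) y - gromovProd o x y := by
    unfold gromovProd
    rw [dist_comm o (g u)]
    linarith
  linarith

/-- Dyadic lemma: a rough-Lipschitz chain whose endpoints have small Gromov product
at `x` passes near `x`. -/
lemma chain_near (hYg : GeodesicSpace Y) {δ : ℝ} (hδ0 : 0 ≤ δ)
    (hδ : ∀ o x y z : Y, min (gromovProd o x z) (gromovProd o z y) - δ ≤ gromovProd o x y)
    (κ c : ℝ) (hκ : 0 ≤ κ) (hc : 0 ≤ c) :
    ∀ k : ℕ, ∀ a b : ℝ, a ≤ b → b - a ≤ 2^k →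
    ∀ p : ℝ → Y, (∀ s ∈ Set.Icc a b, ∀ t ∈ Set.Icc a b, dist (p s) (p t) ≤ κ * |s - t| + c) →
    ∀ x : Y, ∀ c₀ : ℝ, 0 ≤ c₀ → gromovProd x (p a) (p b) ≤ c₀ →
    ∃ s ∈ Set.Icc a b, dist x (p s) ≤ 2*c₀ + 3*δ*k + κ + c := by
  intro k
  induction k with
  | zero =>
    intro a b hab h2 p hp x c₀ hc₀ hprod
    refine ⟨a, ⟨le_rfl, hab⟩, ?_⟩
    have h1 := hp a ⟨le_rfl, hab⟩ b ⟨hab, le_rfl⟩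
    have habs : |a - b| ≤ 1 := by
      rw [abs_sub_comm, abs_of_nonneg (by linarith)]
      simpa using h2
    have hmul : κ * |a - b| ≤ κ * 1 := mul_le_mul_of_nonneg_left habs hκ
    unfold gromovProd at hprod
    have hd1 := dist_nonneg (x := p b) (y := x)
    have hc1 := dist_comm x (p a)
    push_cast
    linarith
  | succ k ih =>
    intro a b hab h2 p hp x c₀ hc₀ hprod
    set j := (a + b) / 2 with hjdef
    have hja : a ≤ j := by unfold j; linarith
    have hjb : j ≤ b := by unfold j; linarith
    have h2a : j - a ≤ 2^k := by
      have : (2:ℝ)^(k+1) = 2 * 2^k := by ring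
      rw [this] at h2
      unfold j; linarith
    have h2b : b - j ≤ 2^k := by
      have : (2:ℝ)^(k+1) = 2 * 2^k := by ring
      rw [this] at h2
      unfold j; linarith
    have hmin := hδ x (p a) (p b) (p j)
    have hmin' : min (gromovProd x (p a) (p j)) (gromovProd x (p j) (p b)) ≤ c₀ + δ := by
      linarith
    rcases min_le_iff.mp hmin' with hcase | hcase
    · -- left half
      obtain ⟨z, hzsum, hznear⟩ := exists_near_point hYg hδ (p a) (p j) x
      have hz0 : gromovProd z (p a) (p j) ≤ 0 := by
        unfold gromovProd
        rw [dist_comm (p a) z, dist_comm (p j) z]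
        have h1 := dist_comm z (p a)
        linarith
      obtain ⟨s, hs, hds⟩ := ih a j hja h2a p
        (fun s hs t ht => hp s ⟨hs.1, le_trans hs.2 hjb⟩ t ⟨ht.1, le_trans ht.2 hjb⟩)
        z 0 le_rfl hz0
      refine ⟨s, ⟨hs.1, le_trans hs.2 hjb⟩, ?_⟩
      have := dist_triangle x z (p s)
      push_cast
      linarith
    · -- right half
      obtain ⟨z, hzsum, hznear⟩ := exists_near_point hYg hδ (p j) (p b) x
      have hz0 : gromovProd z (p j) (p b) ≤ 0 := by
        unfold gromovProd
        rw [dist_comm (p j) z, dist_comm (p b) z]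
        have h1 := dist_comm z (p j)
        linarith
      obtain ⟨s, hs, hds⟩ := ih j b hjb h2b p
        (fun s hs t ht => hp s ⟨le_trans hja hs.1, hs.2⟩ t ⟨le_trans hja ht.1, ht.2⟩)
        z 0 le_rfl hz0
      refine ⟨s, ⟨le_trans hja hs.1, hs.2⟩, ?_⟩
      have := dist_triangle x z (p s)
      push_cast
      linarith

set_option maxHeartbeats 1000000 in
/-- Morse lemma, direction 1: every point of a geodesic joining the endpoints of a
quasigeodesic is uniformly close to the quasigeodesic. -/
lemma geodesic_near_chain (hYg : GeodesicSpace Y) {δ : ℝ} (hδ0 : 0 ≤ δ)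
    (hδ : ∀ o x y z : Y, min (gromovProd o x z) (gromovProd o z y) - δ ≤ gromovProd o x y)
    (α β : ℝ) (hα : 1 ≤ α) (hβ : 0 ≤ β) :
    ∃ R : ℝ, 0 ≤ R ∧ ∀ N : ℝ, 0 ≤ N → ∀ q : ℝ → Y,
      (∀ s ∈ Set.Icc (0:ℝ) N, ∀ t ∈ Set.Icc (0:ℝ) N,
        α⁻¹ * |s - t| - β ≤ dist (q s) (q t) ∧ dist (q s) (q t) ≤ α * |s - t| + β) →
      ∀ σ : ℝ → Y, σ 0 = q 0 → σ (dist (q 0) (q N)) = q N →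
      (∀ u ∈ Set.Icc 0 (dist (q 0) (q N)), ∀ w ∈ Set.Icc 0 (dist (q 0) (q N)),
        dist (σ u) (σ w) = |u - w|) →
      ∀ u' ∈ Set.Icc 0 (dist (q 0) (q N)), ∃ s ∈ Set.Icc 0 N, dist (σ u') (q s) ≤ R := by
  set A : ℝ := 9*δ*Real.sqrt (α*(6+β)) with hAdef
  set c₇ : ℝ := 7*δ+α+β with hc₇def
  have hA0 : 0 ≤ A := mul_nonneg (by linarith) (Real.sqrt_nonneg _)
  have hc₇0 : 0 ≤ c₇ := by rw [hc₇def]; linarith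
  set R₀ : ℝ := max (2*δ) ((A + c₇ + 1)^2 - 1) with hR₀def
  have hR₀0 : 0 ≤ R₀ := le_trans (by linarith) (le_max_left _ _)
  refine ⟨R₀ + 1, by linarith, ?_⟩
  intro N hN q hq σ hσ0 hσN hσiso
  set L := dist (q 0) (q N) with hLdef
  have hL0 : (0:ℝ) ≤ L := dist_nonneg
  set S := q '' Set.Icc (0:ℝ) N with hSdef
  have hSne : S.Nonempty := ⟨q 0, ⟨0, ⟨le_rfl, hN⟩, rfl⟩⟩
  have hσc : ContinuousOn σ (Set.Icc 0 L) := by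
    refine LipschitzOnWith.continuousOn (K := 1) ?_
    refine LipschitzOnWith.of_dist_le_mul ?_
    intro s hs t ht
    rw [hσiso s hs t ht, NNReal.coe_one, one_mul, Real.dist_eq]
  have hFc : ContinuousOn (fun u => Metric.infDist (σ u) S) (Set.Icc 0 L) :=
    (Metric.continuous_infDist_pt S).comp_continuousOn hσc
  obtain ⟨u₀, hu₀, hmax'⟩ := isCompact_Icc.exists_isMaxOn ⟨0, le_rfl, hL0⟩ hFc
  have hmax : ∀ u ∈ Set.Icc (0:ℝ) L, Metric.infDist (σ u) S ≤ Metric.infDist (σ u₀) S :=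
    fun u hu => hmax' hu
  set D := Metric.infDist (σ u₀) S with hDdef
  have hD0 : 0 ≤ D := Metric.infDist_nonneg
  have hDlow : ∀ s ∈ Set.Icc (0:ℝ) N, D ≤ dist (σ u₀) (q s) := by
    intro s hs
    exact Metric.infDist_le_dist_of_mem ⟨s, hs, rfl⟩
  suffices hDb : D ≤ R₀ by
    intro u' hu'
    have h1 : Metric.infDist (σ u') S ≤ D := hmax u' hu'
    have h2 : Metric.infDist (σ u') S < R₀ + 1 := lt_of_le_of_lt (h1.trans hDb) (lt_add_one _)
    rw [Metric.infDist_lt_iff hSne] at h2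
    obtain ⟨w, ⟨s, hs, rfl⟩, hw⟩ := h2
    exact ⟨s, hs, hw.le⟩
  -- main bound on D
  set uy := max 0 (u₀ - (2*D+2)) with huydef
  set uz := min L (u₀ + (2*D+2)) with huzdef
  have huy : uy ∈ Set.Icc 0 L := ⟨le_max_left _ _, max_le hL0 (by linarith [hu₀.2])⟩
  have huz : uz ∈ Set.Icc 0 L := ⟨le_min hL0 (by linarith [hu₀.1]), min_le_left _ _⟩
  have hyu : uy ≤ u₀ := max_le hu₀.1 (by linarith)
  have hzu : u₀ ≤ uz := le_min hu₀.2 (by linarith)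
  have hxy : dist (σ u₀) (σ uy) = u₀ - uy := by
    rw [hσiso u₀ hu₀ uy huy, abs_of_nonneg (by linarith)]
  have hxz : dist (σ u₀) (σ uz) = uz - u₀ := by
    rw [hσiso u₀ hu₀ uz huz, abs_of_nonpos (by linarith), neg_sub]
  have hyz : dist (σ uy) (σ uz) = uz - uy := by
    rw [hσiso uy huy uz huz, abs_of_nonpos (by linarith), neg_sub]
  -- selection of near chain points
  have hy : ∃ sy ∈ Set.Icc (0:ℝ) N,
      dist (σ uy) (q sy) ≤ D + 1 ∧ D ≤ gromovProd (σ u₀) (σ uy) (q sy) := by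
    rcases le_or_gt 0 (u₀ - (2*D+2)) with hcase | hcase
    · have huyval : uy = u₀ - (2*D+2) := max_eq_right hcase
      have h1 : Metric.infDist (σ uy) S < D + 1 := lt_of_le_of_lt (hmax uy huy) (lt_add_one _)
      rw [Metric.infDist_lt_iff hSne] at h1
      obtain ⟨w, ⟨sy, hsy, rfl⟩, hw⟩ := h1
      refine ⟨sy, hsy, hw.le, ?_⟩
      have hd1 : dist (σ uy) (σ u₀) = 2*D+2 := by rw [dist_comm, hxy, huyval]; ring
      have hd2 := hDlow sy hsy
      have hc1 := dist_comm (σ u₀) (q sy)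
      have hc2 := dist_comm (σ uy) (σ u₀)
      unfold gromovProd
      linarith
    · have huyval : uy = 0 := max_eq_left (by linarith)
      have hσuy : σ uy = q 0 := by rw [huyval, hσ0]
      refine ⟨0, ⟨le_rfl, hN⟩, ?_, ?_⟩
      · rw [hσuy, dist_self]; linarith
      · have hd2 := hDlow 0 ⟨le_rfl, hN⟩
        have hc1 := dist_comm (σ u₀) (q 0)
        rw [hσuy]
        unfold gromovProd
        rw [dist_self]
        linarith
  have hz : ∃ sz ∈ Set.Icc (0:ℝ) N,
      dist (σ uz) (q sz) ≤ D + 1 ∧ D ≤ gromovProd (σ u₀) (q sz) (σ uz) := by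
    rcases le_or_gt (u₀ + (2*D+2)) L with hcase | hcase
    · have huzval : uz = u₀ + (2*D+2) := min_eq_right hcase
      have h1 : Metric.infDist (σ uz) S < D + 1 := lt_of_le_of_lt (hmax uz huz) (lt_add_one _)
      rw [Metric.infDist_lt_iff hSne] at h1
      obtain ⟨w, ⟨sz, hsz, rfl⟩, hw⟩ := h1
      refine ⟨sz, hsz, hw.le, ?_⟩
      have hd1 : dist (σ uz) (σ u₀) = 2*D+2 := by rw [dist_comm, hxz, huzval]; ring
      have hd2 := hDlow sz hsz
      have hc1 := dist_comm (σ u₀) (q sz)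
      have hc2 := dist_comm (σ uz) (σ u₀)
      have hc3 := dist_comm (σ uz) (q sz)
      unfold gromovProd
      linarith
    · have huzval : uz = L := min_eq_left (by linarith)
      have hσuz : σ uz = q N := by rw [huzval, hσN]
      refine ⟨N, ⟨hN, le_rfl⟩, ?_, ?_⟩
      · rw [hσuz, dist_self]; linarith
      · have hd2 := hDlow N ⟨hN, le_rfl⟩
        have hc1 := dist_comm (σ u₀) (q N)
        rw [hσuz]
        unfold gromovProd
        rw [dist_self]
        linarith
  obtain ⟨sy, hsy, hdy, hpy⟩ := hy
  obtain ⟨sz, hsz, hdz, hpz⟩ := hz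
  -- (y|z)_x = 0
  have hyz0 : gromovProd (σ u₀) (σ uy) (σ uz) = 0 := by
    unfold gromovProd
    rw [dist_comm (σ uy) (σ u₀), dist_comm (σ uz) (σ u₀), hxy, hxz, hyz]
    ring
  -- three-case analysis
  have hmin1 := hδ (σ u₀) (σ uy) (σ uz) (q sy)
  rw [hyz0] at hmin1
  rcases min_le_iff.mp (by linarith : min (gromovProd (σ u₀) (σ uy) (q sy))
      (gromovProd (σ u₀) (q sy) (σ uz)) ≤ δ) with hcase1 | hcase1
  · -- D ≤ δ
    have : D ≤ 2*δ := by linarith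
    exact this.trans (le_max_left _ _)
  have hmin2 := hδ (σ u₀) (q sy) (σ uz) (q sz)
  rcases min_le_iff.mp (by linarith : min (gromovProd (σ u₀) (q sy) (q sz))
      (gromovProd (σ u₀) (q sz) (σ uz)) ≤ 2*δ) with hcase2 | hcase2
  swap
  · -- D ≤ 2δ
    have : D ≤ 2*δ := by linarith
    exact this.trans (le_max_left _ _)
  -- main case : (q sy | q sz)_x ≤ 2δ
  set s₁ := min sy sz with hs₁def
  set s₂ := max sy sz with hs₂def
  have hs₁mem : s₁ ∈ Set.Icc (0:ℝ) N := ⟨le_min hsy.1 hsz.1, (min_le_left _ _).trans hsy.2⟩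
  have hs₂mem : s₂ ∈ Set.Icc (0:ℝ) N := ⟨hsy.1.trans (le_max_left _ _), max_le hsy.2 hsz.2⟩
  have hprod : gromovProd (σ u₀) (q s₁) (q s₂) ≤ 2*δ := by
    rcases le_total sy sz with h | h
    · rw [hs₁def, hs₂def, min_eq_left h, max_eq_right h]; exact hcase2
    · rw [hs₁def, hs₂def, min_eq_right h, max_eq_left h, gromovProd_comm]; exact hcase2
  -- bound on chain distance
  have hqdist : dist (q sy) (q sz) ≤ 6*D + 6 := by
    have h1 := dist_triangle (q sy) (σ uy) (q sz)
    have h2 := dist_triangle (σ uy) (σ uz) (q sz)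
    have hc1 := dist_comm (σ uy) (q sy)
    have huzuy : uz - uy ≤ 4*D + 4 := by
      have h3 : uz ≤ u₀ + (2*D+2) := min_le_right _ _
      have h4 : u₀ - (2*D+2) ≤ uy := le_max_right _ _
      linarith
    rw [hyz] at h2
    linarith
  have hq12 : dist (q s₁) (q s₂) ≤ 6*D + 6 := by
    rcases le_total sy sz with h | h
    · rw [hs₁def, hs₂def, min_eq_left h, max_eq_right h]; exact hqdist
    · rw [hs₁def, hs₂def, min_eq_right h, max_eq_left h, dist_comm]; exact hqdist
  set W : ℝ := α * (6*D + 6 + β) with hWdef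
  have hW1 : 1 ≤ W := by
    have h1 : (1:ℝ)*1 ≤ α*(6*D+6+β) :=
      mul_le_mul hα (by linarith) zero_le_one (by linarith)
    rw [hWdef]; linarith
  have hW0 : 0 < W := by linarith
  have hs21 : s₂ - s₁ ≤ W := by
    have hlow := (hq s₁ hs₁mem s₂ hs₂mem).1
    have hs12le : s₁ ≤ s₂ := min_le_max
    have habs : |s₁ - s₂| = s₂ - s₁ := by
      rw [abs_sub_comm, abs_of_nonneg (by linarith)]
    rw [habs] at hlow
    have hαpos : (0:ℝ) < α := by linarith
    have h5 : α⁻¹ * (s₂ - s₁) ≤ 6*D + 6 + β := by linarith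
    calc s₂ - s₁ = α * (α⁻¹ * (s₂ - s₁)) := by field_simp
    _ ≤ α * (6*D + 6 + β) := by
        apply mul_le_mul_of_nonneg_left h5 (by linarith)
  set k : ℕ := ⌈Real.logb 2 W⌉₊ with hkdef
  have hlog0 : 0 ≤ Real.logb 2 W := Real.logb_nonneg (by norm_num) hW1
  have h2k : s₂ - s₁ ≤ 2^k := by
    have h1 : Real.logb 2 W ≤ (k:ℝ) := Nat.le_ceil _
    have h2 : W ≤ (2:ℝ) ^ (k:ℝ) := by
      calc W = (2:ℝ) ^ Real.logb 2 W := (Real.rpow_logb (by norm_num) (by norm_num) hW0).symm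
      _ ≤ (2:ℝ) ^ (k:ℝ) := Real.rpow_le_rpow_of_exponent_le (by norm_num) h1
    rw [Real.rpow_natCast] at h2
    linarith
  obtain ⟨s, hs, hds⟩ := chain_near hYg hδ0 hδ α β (by linarith) hβ k s₁ s₂
    (min_le_max) h2k q
    (fun s hs' t ht' => (hq s ⟨hs₁mem.1.trans hs'.1, hs'.2.trans hs₂mem.2⟩
      t ⟨hs₁mem.1.trans ht'.1, ht'.2.trans hs₂mem.2⟩).2)
    (σ u₀) (2*δ) (by linarith) hprod
  have hsmem : s ∈ Set.Icc (0:ℝ) N := ⟨hs₁mem.1.trans hs.1, hs.2.trans hs₂mem.2⟩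
  have hDs := hDlow s hsmem
  -- D ≤ 4δ + 3δk + α + β
  have hDk : D ≤ 4*δ + 3*δ*(k:ℝ) + α + β := by linarith
  -- bound k
  have hklt : (k:ℝ) < Real.logb 2 W + 1 := Nat.ceil_lt_add_one hlog0
  have hsqrtW0 : 0 ≤ Real.sqrt W := Real.sqrt_nonneg _
  have hlogle : Real.logb 2 W ≤ 3 * Real.sqrt W := by
    have hlW : Real.log W ≤ 2 * Real.sqrt W := by
      have h1 := Real.log_le_sub_one_of_pos (Real.sqrt_pos.mpr hW0)
      have h2 : Real.log (Real.sqrt W) = Real.log W / 2 := Real.log_sqrt hW0.le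
      linarith
    have hl2 : (0.6931471803 : ℝ) < Real.log 2 := Real.log_two_gt_d9
    rw [Real.logb]
    rw [div_le_iff₀ (by linarith)]
    have h6 : 0 ≤ Real.sqrt W * (3 * Real.log 2 - 2) := mul_nonneg hsqrtW0 (by linarith)
    have h7 : 3*Real.sqrt W*Real.log 2 - 2*Real.sqrt W = Real.sqrt W * (3*Real.log 2 - 2) := by
      ring
    linarith
  have hsqW : Real.sqrt W ≤ Real.sqrt (α*(6+β)) * Real.sqrt (D+1) := by
    have h1 : W ≤ (α*(6+β)) * (D+1) := by
      have e0 : α*(6+β)*(D+1) - α*(6*D+6+β) = α*β*D := by ring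
      have e1 : 0 ≤ α*β*D := mul_nonneg (mul_nonneg (by linarith) hβ) hD0
      rw [hWdef]; linarith
    calc Real.sqrt W ≤ Real.sqrt ((α*(6+β)) * (D+1)) := Real.sqrt_le_sqrt h1
    _ = Real.sqrt (α*(6+β)) * Real.sqrt (D+1) := Real.sqrt_mul (by positivity) _
  set E := Real.sqrt (D+1) with hEdef
  have hE2 : E^2 = D + 1 := Real.sq_sqrt (by linarith)
  have hE1 : 1 ≤ E := by
    have h := Real.sqrt_le_sqrt (show (1:ℝ) ≤ D+1 by linarith)
    rw [Real.sqrt_one] at h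
    rw [hEdef]
    exact h
  have hDE : D ≤ c₇ + A*E := by
    have h3 : 3*δ*(k:ℝ) ≤ 3*δ*(Real.logb 2 W + 1) := by
      apply mul_le_mul_of_nonneg_left hklt.le (by linarith)
    have h3' : 3*δ*(Real.logb 2 W + 1) = 3*δ*Real.logb 2 W + 3*δ := by ring
    have h4 : 3*δ*(Real.logb 2 W) ≤ 3*δ*(3*Real.sqrt W) := by
      apply mul_le_mul_of_nonneg_left hlogle (by linarith)
    have h4' : 3*δ*(3*Real.sqrt W) = 9*δ*Real.sqrt W := by ring
    have h5 : 9*δ*Real.sqrt W ≤ 9*δ*(Real.sqrt (α*(6+β)) * E) := by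
      apply mul_le_mul_of_nonneg_left hsqW (by linarith)
    have h5' : 9*δ*(Real.sqrt (α*(6+β)) * E) = 9*δ*Real.sqrt (α*(6+β))*E := by ring
    rw [hAdef, hc₇def]
    linarith
  -- solve the inequality
  set P := A + c₇ + 1 with hPdef
  have hP1 : 1 ≤ P := by linarith
  have hPE : 0 ≤ E * (P - E) := by
    have h8 : 0 ≤ (c₇+1) * (E-1) := mul_nonneg (by linarith) (by linarith)
    have e1 : E*(P-E) = A*E + c₇*E + E - E^2 := by rw [hPdef]; ring
    have e2 : (c₇+1)*(E-1) = c₇*E + E - c₇ - 1 := by ring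
    rw [e1]
    linarith [hE2, hDE]
  have hEP : E ≤ P := by
    by_contra hcon
    push_neg at hcon
    have h9 : E*(P-E) < 0 := mul_neg_of_pos_of_neg (by linarith) (by linarith)
    linarith
  have hfin : D ≤ P^2 - 1 := by
    have hsq : E*E ≤ P*P := mul_le_mul hEP hEP (by linarith) (by linarith)
    have e3 : E^2 = E*E := pow_two E
    have e4 : P^2 = P*P := pow_two P
    linarith [hE2]
  calc D ≤ (A + c₇ + 1)^2 - 1 := hfin
  _ ≤ R₀ := le_max_right _ _
/-- Morse lemma, direction 2: every point of the quasigeodesic is uniformly close to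
any geodesic joining its endpoints. -/
lemma chain_near_geodesic (hYg : GeodesicSpace Y) {δ : ℝ} (hδ0 : 0 ≤ δ)
    (hδ : ∀ o x y z : Y, min (gromovProd o x z) (gromovProd o z y) - δ ≤ gromovProd o x y)
    (α β : ℝ) (hα : 1 ≤ α) (hβ : 0 ≤ β) :
    ∃ R : ℝ, 0 ≤ R ∧ ∀ N : ℝ, 0 ≤ N → ∀ q : ℝ → Y,
      (∀ s ∈ Set.Icc (0:ℝ) N, ∀ t ∈ Set.Icc (0:ℝ) N,
        α⁻¹ * |s - t| - β ≤ dist (q s) (q t) ∧ dist (q s) (q t) ≤ α * |s - t| + β) →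
      ∀ σ : ℝ → Y, σ 0 = q 0 → σ (dist (q 0) (q N)) = q N →
      (∀ u ∈ Set.Icc 0 (dist (q 0) (q N)), ∀ w ∈ Set.Icc 0 (dist (q 0) (q N)),
        dist (σ u) (σ w) = |u - w|) →
      ∀ t ∈ Set.Icc (0:ℝ) N, ∃ u ∈ Set.Icc 0 (dist (q 0) (q N)), dist (q t) (σ u) ≤ R := by
  obtain ⟨R, hR0, hR⟩ := geodesic_near_chain hYg hδ0 hδ α β hα hβ
  refine ⟨α*α*(2*R+2+β) + β + R + 1, by positivity, ?_⟩
  intro N hN q hq σ hσ0 hσN hσiso t ht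
  set L := dist (q 0) (q N) with hLdef
  have hL0 : (0:ℝ) ≤ L := dist_nonneg
  have hσc : ContinuousOn σ (Set.Icc 0 L) := by
    refine LipschitzOnWith.continuousOn (K := 1) ?_
    refine LipschitzOnWith.of_dist_le_mul ?_
    intro s hs w hw
    rw [hσiso s hs w hw, NNReal.coe_one, one_mul, Real.dist_eq]
  set SA := q '' Set.Icc (0:ℝ) t with hSAdef
  set SB := q '' Set.Icc t N with hSBdef
  have hSAne : SA.Nonempty := ⟨q 0, ⟨0, ⟨le_rfl, ht.1⟩, rfl⟩⟩
  have hSBne : SB.Nonempty := ⟨q N, ⟨N, ⟨ht.2, le_rfl⟩, rfl⟩⟩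
  set A := Set.Icc 0 L ∩ (fun u => Metric.infDist (σ u) SA) ⁻¹' Set.Iic R with hAdef
  set B := Set.Icc 0 L ∩ (fun u => Metric.infDist (σ u) SB) ⁻¹' Set.Iic R with hBdef
  have hAcl : IsClosed A :=
    ContinuousOn.preimage_isClosed_of_isClosed
      ((Metric.continuous_infDist_pt SA).comp_continuousOn hσc) isClosed_Icc isClosed_Iic
  have hBcl : IsClosed B :=
    ContinuousOn.preimage_isClosed_of_isClosed
      ((Metric.continuous_infDist_pt SB).comp_continuousOn hσc) isClosed_Icc isClosed_Iic
  have hcover : Set.Icc 0 L ⊆ A ∪ B := by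
    intro u hu
    obtain ⟨s, hs, hds⟩ := hR N hN q hq σ hσ0 hσN hσiso u hu
    rcases le_total s t with hst | hst
    · left
      refine ⟨hu, ?_⟩
      have : Metric.infDist (σ u) SA ≤ dist (σ u) (q s) :=
        Metric.infDist_le_dist_of_mem ⟨s, ⟨hs.1, hst⟩, rfl⟩
      exact this.trans hds
    · right
      refine ⟨hu, ?_⟩
      have : Metric.infDist (σ u) SB ≤ dist (σ u) (q s) :=
        Metric.infDist_le_dist_of_mem ⟨s, ⟨hst, hs.2⟩, rfl⟩
      exact this.trans hds
  have hA0 : (Set.Icc 0 L ∩ A).Nonempty := by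
    refine ⟨0, ⟨le_rfl, hL0⟩, ⟨le_rfl, hL0⟩, ?_⟩
    show Metric.infDist (σ 0) SA ≤ R
    have : Metric.infDist (σ 0) SA ≤ dist (σ 0) (q 0) :=
      Metric.infDist_le_dist_of_mem ⟨0, ⟨le_rfl, ht.1⟩, rfl⟩
    rw [hσ0, dist_self] at this
    rw [hσ0]
    linarith
  have hB0 : (Set.Icc 0 L ∩ B).Nonempty := by
    refine ⟨L, ⟨hL0, le_rfl⟩, ⟨hL0, le_rfl⟩, ?_⟩
    show Metric.infDist (σ L) SB ≤ R
    have : Metric.infDist (σ L) SB ≤ dist (σ L) (q N) :=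
      Metric.infDist_le_dist_of_mem ⟨N, ⟨ht.2, le_rfl⟩, rfl⟩
    rw [hσN, dist_self] at this
    rw [hσN]
    linarith
  obtain ⟨u, huIcc, huA, huB⟩ :=
    isPreconnected_closed_iff.mp isPreconnected_Icc A B hAcl hBcl hcover hA0 hB0
  have hdA : Metric.infDist (σ u) SA < R + 1 := lt_of_le_of_lt huA.2 (lt_add_one R)
  have hdB : Metric.infDist (σ u) SB < R + 1 := lt_of_le_of_lt huB.2 (lt_add_one R)
  rw [Metric.infDist_lt_iff hSAne] at hdA
  rw [Metric.infDist_lt_iff hSBne] at hdB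
  obtain ⟨w1, ⟨s₁, hs₁, rfl⟩, hw1⟩ := hdA
  obtain ⟨w2, ⟨s₂, hs₂, rfl⟩, hw2⟩ := hdB
  refine ⟨u, huA.1, ?_⟩
  -- s₁ ≤ t ≤ s₂, both near σ u
  have hs₁mem : s₁ ∈ Set.Icc (0:ℝ) N := ⟨hs₁.1, hs₁.2.trans ht.2⟩
  have hs₂mem : s₂ ∈ Set.Icc (0:ℝ) N := ⟨ht.1.trans hs₂.1, hs₂.2⟩
  have hd12 : dist (q s₁) (q s₂) ≤ 2*(R+1) := by
    have h1 := dist_triangle (q s₁) (σ u) (q s₂)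
    have h2 := dist_comm (σ u) (q s₁)
    linarith
  have hlow := (hq s₁ hs₁mem s₂ hs₂mem).1
  have habs : |s₁ - s₂| = s₂ - s₁ := by
    rw [abs_sub_comm, abs_of_nonneg (by linarith [hs₁.2, hs₂.1])]
  rw [habs] at hlow
  have hαpos : (0:ℝ) < α := by linarith
  have hs21 : s₂ - s₁ ≤ α * (2*R+2+β) := by
    have h5 : α⁻¹ * (s₂ - s₁) ≤ 2*R+2+β := by linarith
    calc s₂ - s₁ = α * (α⁻¹ * (s₂ - s₁)) := by field_simp
    _ ≤ α * (2*R+2+β) := mul_le_mul_of_nonneg_left h5 (by linarith)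
  have hts₁ : t - s₁ ≤ α * (2*R+2+β) := by linarith [hs₂.1]
  have hup := (hq t ht s₁ hs₁mem).2
  have habs2 : |t - s₁| = t - s₁ := abs_of_nonneg (by linarith [hs₁.2])
  rw [habs2] at hup
  have h6 : α * (t - s₁) ≤ α * (α * (2*R+2+β)) := mul_le_mul_of_nonneg_left hts₁ (by linarith)
  calc dist (q t) (σ u) ≤ dist (q t) (q s₁) + dist (q s₁) (σ u) := dist_triangle _ _ _
  _ ≤ (α * (t - s₁) + β) + (R + 1) := by
      have := dist_comm (σ u) (q s₁)
      linarith
  _ ≤ α*α*(2*R+2+β) + β + R + 1 := by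
      have e : α * (α * (2*R+2+β)) = α*α*(2*R+2+β) := by ring
      linarith

end Helpers

set_option maxHeartbeats 1000000 in
/-- Let `X, Y` be proper Gromov hyperbolic geodesic metric spaces and
`f : X → Y` a quasi-isometry.  If `X` has a pole at `v`, then `Y` has a pole at `f v`. -/
theorem hasPole_image_of_quasiIsometry [MetricSpace X] [MetricSpace Y]
    [ProperSpace X] [ProperSpace Y]
    (hXh : GromovHyperbolic X) (hYh : GromovHyperbolic Y)
    (hXg : GeodesicSpace X) (hYg : GeodesicSpace Y)
    (f : X → Y) (hf : QuasiIsometry f) (v : X) (hv : HasPoleAt v) :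
    HasPoleAt (f v) := by
  obtain ⟨δ, hδ0, hδ⟩ := hYh
  obtain ⟨α, β, ε, hα, hβ, hε, hqi, hfull⟩ := hf
  obtain ⟨M, hM0, hpole⟩ := hv
  obtain ⟨R₃, hR₃0, hR₃⟩ := chain_near_geodesic hYg hδ0 hδ α β hα hβ
  have hαpos : (0:ℝ) < α := by linarith
  have hαM : (0:ℝ) ≤ α*M := mul_nonneg (by linarith) hM0.le
  refine ⟨ε + α*M + β + R₃ + 1, by linarith, ?_⟩
  intro y
  obtain ⟨x, hx⟩ := hfull y
  obtain ⟨γ, ⟨hγ0, hγiso⟩, t₀, ht₀0, ht₀⟩ := hpole x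
  set q : ℝ → Y := fun r => f (γ r) with hqdef
  have hq0 : q 0 = f v := by show f (γ 0) = f v; rw [hγ0]
  have hqbounds : ∀ s t : ℝ, 0 ≤ s → 0 ≤ t →
      α⁻¹ * |s - t| - β ≤ dist (q s) (q t) ∧ dist (q s) (q t) ≤ α * |s - t| + β := by
    intro s t hs ht
    have h := hqi (γ s) (γ t)
    rw [hγiso s t hs ht] at h
    exact h
  -- geodesics from f v to q n
  have hσex : ∀ n : ℕ, ∃ σ : ℝ → Y, σ 0 = q 0 ∧ σ (dist (q 0) (q n)) = q n ∧
      ∀ s t : ℝ, s ∈ Set.Icc 0 (dist (q 0) (q n)) → t ∈ Set.Icc 0 (dist (q 0) (q n)) →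
        dist (σ s) (σ t) = |s - t| := fun n => hYg (q 0) (q n)
  choose σ hσ0 hσN hσiso using hσex
  set L : ℕ → ℝ := fun n => dist (q 0) (q n) with hLdef
  have hL0 : ∀ n, 0 ≤ L n := fun n => dist_nonneg
  -- choice of near-points on the geodesics
  have hun : ∀ n : ℕ, ∃ w, w ∈ Set.Icc 0 (L n) ∧
      (t₀ ≤ (n:ℝ) → dist (q t₀) (σ n w) ≤ R₃) := by
    intro n
    by_cases h : t₀ ≤ (n:ℝ)
    · obtain ⟨w, hw, hd⟩ := hR₃ (n:ℝ) (le_trans ht₀0 h) q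
        (fun s hs t ht => hqbounds s t hs.1 ht.1) (σ n) (hσ0 n) (hσN n) (fun a ha b hb => hσiso n a b ha hb) t₀ ⟨ht₀0, h⟩
      exact ⟨w, hw, fun _ => hd⟩
    · exact ⟨0, ⟨le_rfl, hL0 n⟩, fun h' => absurd h' h⟩
  choose u hu hud using hun
  -- L n is eventually large
  have hLev : ∀ C : ℝ, ∀ᶠ n : ℕ in Filter.atTop, C ≤ L n := by
    intro C
    rw [Filter.eventually_atTop]
    refine ⟨⌈(C + β)*α⌉₊, fun n hn => ?_⟩
    have h1 : ((C+β)*α : ℝ) ≤ (n:ℝ) := le_trans (Nat.le_ceil _) (Nat.cast_le.mpr hn)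
    have h2 := (hqbounds 0 (n:ℝ) le_rfl (Nat.cast_nonneg n)).1
    have habs : |(0:ℝ) - (n:ℝ)| = (n:ℝ) := by
      rw [abs_sub_comm, sub_zero, abs_of_nonneg (Nat.cast_nonneg n)]
    rw [habs] at h2
    have h3 : C + β ≤ α⁻¹ * (n:ℝ) := by
      have h4 := mul_le_mul_of_nonneg_left h1 (by positivity : (0:ℝ) ≤ α⁻¹)
      calc C + β = α⁻¹ * ((C+β)*α) := by field_simp
      _ ≤ α⁻¹ * (n:ℝ) := h4
    show C ≤ dist (q 0) (q (n:ℝ))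
    linarith
  have hevt₀ : ∀ᶠ n : ℕ in Filter.atTop, t₀ ≤ (n:ℝ) := by
    rw [Filter.eventually_atTop]
    exact ⟨⌈t₀⌉₊, fun n hn => le_trans (Nat.le_ceil _) (Nat.cast_le.mpr hn)⟩
  -- ultrafilter
  let U : Ultrafilter ℕ := Ultrafilter.of Filter.atTop
  have hUle : (U : Filter ℕ) ≤ Filter.atTop := Ultrafilter.of_le _
  haveI hUne : (U : Filter ℕ).NeBot := U.neBot
  -- limit ray
  have hlim : ∀ t : ℝ, ∃ p : Y,
      Filter.Tendsto (fun n => σ n (min (max t 0) (L n))) (U : Filter ℕ) (nhds p) := by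
    intro t
    have hc : ∀ n, min (max t 0) (L n) ∈ Set.Icc 0 (L n) :=
      fun n => ⟨le_min (le_max_right t 0) (hL0 n), min_le_right _ _⟩
    have hmem : ∀ n, σ n (min (max t 0) (L n)) ∈ Metric.closedBall (f v) (max t 0) := by
      intro n
      rw [Metric.mem_closedBall]
      have h1 := hσiso n _ 0 (hc n) ⟨le_rfl, hL0 n⟩
      rw [hσ0 n, hq0] at h1
      rw [h1, sub_zero, abs_of_nonneg (hc n).1]
      exact min_le_left _ _
    have hcomp := isCompact_closedBall (f v) (max t 0)
    have hle : (Ultrafilter.map (fun n => σ n (min (max t 0) (L n))) U : Filter Y) ≤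
        Filter.principal (Metric.closedBall (f v) (max t 0)) := by
      rw [Ultrafilter.coe_map, Filter.le_principal_iff, Filter.mem_map]
      exact Filter.univ_mem' hmem
    obtain ⟨p, -, hp⟩ := hcomp.ultrafilter_le_nhds _ hle
    rw [Ultrafilter.coe_map] at hp
    exact ⟨p, hp⟩
  choose σb hσb using hlim
  -- the limit is a geodesic ray from f v
  have hray0 : σb 0 = f v := by
    have heqfun : (fun n : ℕ => σ n (min (max (0:ℝ) 0) (L n))) = fun _ => f v := by
      funext n
      rw [max_self, min_eq_left (hL0 n), hσ0 n, hq0]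
    have h1 : Filter.Tendsto (fun n : ℕ => σ n (min (max (0:ℝ) 0) (L n))) ↑U (nhds (f v)) := by
      rw [heqfun]; exact tendsto_const_nhds
    exact tendsto_nhds_unique (hσb 0) h1
  have hrayiso : ∀ s t : ℝ, 0 ≤ s → 0 ≤ t → dist (σb s) (σb t) = |s - t| := by
    intro s t hs ht
    have h1 := (hσb s).dist (hσb t)
    have h2 : ∀ᶠ n in (U : Filter ℕ),
        dist (σ n (min (max s 0) (L n))) (σ n (min (max t 0) (L n))) = |s - t| := by
      refine ((hLev (max s t)).filter_mono hUle).mono ?_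
      intro n hn
      have hs' : min (max s 0) (L n) = s := by
        rw [max_eq_left hs, min_eq_left (le_trans (le_max_left s t) hn)]
      have ht' : min (max t 0) (L n) = t := by
        rw [max_eq_left ht, min_eq_left (le_trans (le_max_right s t) hn)]
      rw [hs', ht']
      exact hσiso n s t ⟨hs, le_trans (le_max_left s t) hn⟩ ⟨ht, le_trans (le_max_right s t) hn⟩
    have h3 : Filter.Tendsto
        (fun n => dist (σ n (min (max s 0) (L n))) (σ n (min (max t 0) (L n))))
        ↑U (nhds (|s - t|)) :=
      Filter.Tendsto.congr' (h2.mono fun n hn => hn.symm) tendsto_const_nhds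
    exact tendsto_nhds_unique h1 h3
  -- the parameter t*
  set B : ℝ := α*t₀ + β + R₃ with hBdef
  have hubound : ∀ᶠ n in (U : Filter ℕ), u n ∈ Set.Icc (0:ℝ) B := by
    refine (hevt₀.filter_mono hUle).mono ?_
    intro n hn
    refine ⟨(hu n).1, ?_⟩
    have h1 := hud n hn
    have h2 := hσiso n (u n) 0 (hu n) ⟨le_rfl, hL0 n⟩
    rw [hσ0 n, hq0] at h2
    rw [sub_zero, abs_of_nonneg (hu n).1] at h2
    have h3 := dist_triangle (σ n (u n)) (q t₀) (q 0)
    have h4 := (hqbounds t₀ 0 ht₀0 le_rfl).2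
    have habs : |t₀ - (0:ℝ)| = t₀ := by rw [sub_zero, abs_of_nonneg ht₀0]
    rw [habs, hq0] at h4
    rw [hq0] at h3
    have h5 := dist_comm (q t₀) (σ n (u n))
    rw [hBdef]
    linarith
  have hle2 : (Ultrafilter.map u U : Filter ℝ) ≤ Filter.principal (Set.Icc (0:ℝ) B) := by
    rw [Ultrafilter.coe_map, Filter.le_principal_iff, Filter.mem_map]
    exact hubound
  obtain ⟨tstar, htmem, htconv⟩ := isCompact_Icc.ultrafilter_le_nhds _ hle2
  rw [Ultrafilter.coe_map] at htconv
  have htconv' : Filter.Tendsto u (U : Filter ℕ) (nhds tstar) := htconv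
  -- final distance estimate
  have hfinal : dist (q t₀) (σb tstar) ≤ R₃ := by
    have h1 : Filter.Tendsto (fun n => dist (q t₀) (σ n (min (max tstar 0) (L n)))) ↑U
        (nhds (dist (q t₀) (σb tstar))) := tendsto_const_nhds.dist (hσb tstar)
    have h3 : Filter.Tendsto (fun n : ℕ => R₃ + |u n - tstar|) ↑U (nhds (R₃ + 0)) := by
      have h4 := (htconv'.sub (tendsto_const_nhds (x := tstar))).abs
      rw [sub_self, abs_zero] at h4
      exact tendsto_const_nhds.add h4
    rw [add_zero] at h3
    have h2 : ∀ᶠ n in (U : Filter ℕ),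
        dist (q t₀) (σ n (min (max tstar 0) (L n))) ≤ R₃ + |u n - tstar| := by
      refine (((hLev B).and hevt₀).filter_mono hUle).mono ?_
      rintro n ⟨hn1, hn2⟩
      have htcl : min (max tstar 0) (L n) = tstar := by
        rw [max_eq_left htmem.1, min_eq_left (le_trans htmem.2 hn1)]
      rw [htcl]
      have hd := dist_triangle (q t₀) (σ n (u n)) (σ n tstar)
      have hiso := hσiso n (u n) tstar (hu n) ⟨htmem.1, le_trans htmem.2 hn1⟩
      have h1' := hud n hn2
      rw [hiso] at hd
      linarith
    exact le_of_tendsto_of_tendsto h1 h3 h2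
  refine ⟨σb, ⟨hray0, hrayiso⟩, tstar, htmem.1, ?_⟩
  have hdy : dist y (q t₀) ≤ ε + (α*M + β) := by
    have h1 := dist_triangle y (f x) (q t₀)
    have h2 := (hqi x (γ t₀)).2
    have h3 : α * dist x (γ t₀) ≤ α * M := mul_le_mul_of_nonneg_left ht₀ (by linarith)
    have he : q t₀ = f (γ t₀) := rfl
    rw [he] at h1
    rw [he]
    linarith
  have h6 := dist_triangle y (q t₀) (σb tstar)
  linarith

end TreePaper
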